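/- arXiv:2210.07033 — 2 statements merged into one kernel-verified Lean document; each statement's English description precedes it below -/
import Mathlib

section
/- Let D be an n×n matrix of 1-forms on CP^{n−1} of the form D_{pi} = −d(conj v_p) v_i + (dv_i) conj(v_p) + G_{pi}. Then D* + D = 0 if and only if G* = −G, and setting C^p_{ik} = δ_{pi} d(conj v_k) + D_{pi} conj(v_k), the condition Σ_i C^p_{ii} = 0 holds if and only if G_{pi} conj(v_i) = 0 (summing over i). -/
/-- For a matrix of one-forms `D_{pi} = -(d v̄_p) v_i + (d v_i) v̄_p + G_{pi}` on
`ℂP^{n-1}`: `D* + D = 0` iff `G* = -G`, and with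
`C^p_{ik} = δ_{pi} d v̄_k + D_{pi} v̄_k`, the condition `∑_i C^p_{ii} = 0` holds iff
`∑_i G_{pi} v̄_i = 0`.  Here `Ω` is the algebra of forms, `w i = v̄ i`, `s` is the
`*`-operation (an antimultiplicative involution commuting with `d`, with
`s (v i) = v̄ i`), and the relations `∑ v_i v̄_i = 1`, `∑ (d v_i) v̄_i = 0` hold. -/
theorem antihermitian_conditions (n : ℕ) (Ω : Type*) [Ring Ω] (d : Ω →+ Ω)
    (s : Ω →+ Ω) (v w : Fin n → Ω) (G : Fin n → Fin n → Ω)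
    (hcentral : ∀ i (x : Ω), v i * x = x * v i ∧ w i * x = x * w i)
    (hs_mul : ∀ x y : Ω, s (x * y) = s y * s x)
    (hs_d : ∀ x, s (d x) = d (s x))
    (hsv : ∀ i, s (v i) = w i) (hsw : ∀ i, s (w i) = v i)
    (hrel : ∑ i, v i * w i = 1)
    (hdv : ∑ i, d (v i) * w i = 0) :
    let D : Fin n → Fin n → Ω := fun p i => -(d (w p) * v i) + d (v i) * w p + G p i
    let C : Fin n → Fin n → Fin n → Ω := fun p i k =>
      (if p = i then d (w k) else 0) + D p i * w k
    ((∀ p i, s (D i p) + D p i = 0) ↔ (∀ p i, s (G i p) = - G p i)) ∧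
    ((∀ p, ∑ i, C p i i = 0) ↔ (∀ p, ∑ i, G p i * w i = 0)) := by
  intro D C
  have key1 : ∀ p i : Fin n, s (D i p) + D p i = s (G i p) + G p i := by
    intro p i
    simp only [D, map_add, map_neg, hs_mul, hs_d, hsv, hsw]
    rw [(hcentral p (d (v i))).2, (hcentral i (d (w p))).1]
    abel
  have key2 : ∀ p, ∑ i, C p i i = ∑ i, G p i * w i := by
    intro p
    simp only [C, D]
    rw [Finset.sum_add_distrib, Finset.sum_ite_eq, if_pos (Finset.mem_univ p)]
    have h1 : ∀ i : Fin n, (-(d (w p) * v i) + d (v i) * w p + G p i) * w i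
        = -(d (w p) * (v i * w i)) + (d (v i) * w i) * w p + G p i * w i := by
      intro i
      rw [add_mul, add_mul, neg_mul, mul_assoc, mul_assoc, (hcentral p (w i)).2, ← mul_assoc (d (v i)) (w i) (w p)]
    rw [Finset.sum_congr rfl fun i _ => h1 i, Finset.sum_add_distrib, Finset.sum_add_distrib,
        Finset.sum_neg_distrib, ← Finset.mul_sum, hrel, mul_one, ← Finset.sum_mul, hdv, zero_mul]
    abel
  constructor
  · exact forall_congr' fun p => forall_congr' fun i => by rw [key1, add_eq_zero_iff_eq_neg]
  · exact forall_congr' fun p => by rw [key2]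
end

section
/- Let V be a left M_n(C)-module with action E_{ij} ▷ v = L_{ij}(v). Define on V ⊗ C^∞_{−1}(CP^{n−1}) the operator ∂̄_V(w ⊗ conj(v_j)) = w ⊗ conj(v_q) ⊗ v_q d(conj v_j) − L_{pr}(w) ⊗ conj(v_j) ⊗ v_r d(conj v_p) (summing over q, p, r). Then ∂̄_V satisfies the right Leibniz rule with respect to ∂̄ on C^∞(CP^{n−1}), and any left M_n(C)-module map θ : V → Y intertwines the corresponding operators: ∂̄_Y ∘ (θ ⊗ id) = (θ ⊗ id ⊗ id) ∘ ∂̄_V. -/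
open TensorProduct

/-- The holomorphic structure operator `∂̄_V` on `V ⊗ C^∞_{-1}(ℂP^{n-1})` induced by
a left `Mₙ(ℂ)`-module `V` (with `E_{ij} ▷ x = L_{ij} x`):
`∂̄_V(x ⊗ v̄_j) = ∑_q x ⊗ v̄_q v_q ∂̄ v̄_j - ∑_{p,r} L_{pr}(x) ⊗ v̄_j v_r ∂̄ v̄_p`.
Here `P` models the functions on `S^{2n-1}` (`v i` the coordinates, `w i = v̄ i`),
`R ⊆ P` models `C^∞(ℂP^{n-1})`, `ΩP` the `(0,1)`-forms with `∂̄ = db` a derivation,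
and the module `C_{-1} ⊗ Ω^{0,1}` is realised inside `ΩP` by multiplying the
`C_{-1}` factor into the form.  Then `∂̄_V` satisfies the right Leibniz rule with
respect to `∂̄` on `C^∞(ℂP^{n-1})`, and every left `Mₙ(ℂ)`-module map `θ : V → Y`
intertwines the corresponding operators. -/
theorem holomorphic_structure_functorial (n : ℕ)
    (P : Type*) [CommRing P] [Algebra ℂ P]
    (R : Subalgebra ℂ P)
    (ΩP : Type*) [AddCommGroup ΩP] [Module P ΩP] [Module ℂ ΩP] [IsScalarTower ℂ P ΩP]
    (db : P →ₗ[ℂ] ΩP)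
    (hLeibDb : ∀ x y : P, db (x * y) = x • db y + y • db x)
    (v w : Fin n → P)
    (hvw : ∀ i j, v i * w j ∈ R)
    (hrel : ∑ i, v i * w i = 1)
    (hform : ∑ i, v i • db (w i) = 0)
    (V Y : Type*) [AddCommGroup V] [Module ℂ V] [AddCommGroup Y] [Module ℂ Y]
    (L : Fin n → Fin n → V →ₗ[ℂ] V) (L' : Fin n → Fin n → Y →ₗ[ℂ] Y)
    (hLmul : ∀ a b c d, (L a b).comp (L c d) = if b = c then L a d else 0)
    (hLtr : ∀ x : V, ∑ i, L i i x = x)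
    (DV : V ⊗[ℂ] P →ₗ[ℂ] V ⊗[ℂ] ΩP)
    (DY : Y ⊗[ℂ] P →ₗ[ℂ] Y ⊗[ℂ] ΩP)
    (hDV : ∀ (x : V) (p : P),
      DV (x ⊗ₜ p) = (∑ q, x ⊗ₜ ((w q * v q) • db p))
        - ∑ p', ∑ r, (L p' r x) ⊗ₜ ((p * v r) • db (w p')))
    (hDY : ∀ (y : Y) (p : P),
      DY (y ⊗ₜ p) = (∑ q, y ⊗ₜ ((w q * v q) • db p))
        - ∑ p', ∑ r, (L' p' r y) ⊗ₜ ((p * v r) • db (w p'))) :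
    -- the right Leibniz rule for ∂̄_V over C^∞(ℂP^{n-1})
    (∀ (x : V) (j : Fin n) (f : P), f ∈ R →
      DV (x ⊗ₜ (w j * f))
        = x ⊗ₜ (w j • db f)
          + LinearMap.lTensor V ((LinearMap.lsmul P ΩP f).restrictScalars ℂ)
              (DV (x ⊗ₜ w j))) ∧
    -- functoriality: module maps intertwine the ∂̄ operators
    (∀ θ : V →ₗ[ℂ] Y, (∀ a b x, θ (L a b x) = L' a b (θ x)) →
      ∀ z : V ⊗[ℂ] P,
        DY (LinearMap.rTensor P θ z) = LinearMap.rTensor ΩP θ (DV z)) := by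
  constructor
  · intro x j f hf
    rw [hDV, hDV]
    simp only [hLeibDb (w j) f, smul_add, tmul_add, map_sub, map_sum,
      LinearMap.lTensor_tmul, LinearMap.coe_restrictScalars, LinearMap.lsmul_apply,
      smul_smul, Finset.sum_add_distrib]
    have h1 : ∑ q, x ⊗ₜ[ℂ] ((w q * v q * w j) • db f) = x ⊗ₜ (w j • db f) := by
      rw [← tmul_sum, ← Finset.sum_smul]
      congr 1
      rw [show ∑ q, w q * v q * w j = (∑ i, v i * w i) * w j by
        rw [Finset.sum_mul]; exact Finset.sum_congr rfl fun q _ => by ring, hrel, one_mul]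
    rw [h1, add_sub_assoc]
    congr 1
    congr 1
    · exact Finset.sum_congr rfl fun q _ => by
        rw [show w q * v q * f = f * (w q * v q) from by ring]
    · exact Finset.sum_congr rfl fun p' _ => Finset.sum_congr rfl fun r _ => by
        rw [show w j * f * v r = f * (w j * v r) from by ring]
  · intro θ hθ z
    induction z using TensorProduct.induction_on with
    | zero => simp
    | tmul x p => simp [hDV, hDY, hθ, LinearMap.rTensor_tmul]
    | add a b ha hb => simp [map_add, ha, hb]
end
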